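/- arXiv:math/0504391 — 2 statements merged into one kernel-verified Lean document; each statement's English description precedes it below -/
import Mathlib

section
/- Let d ≥ 1, p ∈ (1,2], m ∈ ℝ, and let α : ℝ^d → ℝ be locally Hölder continuous with α(x) ≥ c(1+|x|)^{m−2} for all x and some c > 0. Then the only function u : ℝ^d × [0,∞) → ℝ that is continuous, nonnegative, twice continuously differentiable in x and once in t on ℝ^d × (0,∞), satisfies ∂u/∂t = (1+|x|)^m Δu − α(x)u^p on ℝ^d × (0,∞), and satisfies u(x,0) = 0 for all x ∈ ℝ^d, is u ≡ 0. -/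
/-!
Every classical solution is compared, through the parabolic maximum principle on balls, with
stationary radial supersolutions `v`, i.e. `(1 + |x|)^m Δv ≤ α v^p`; since `α ≥ c (1 + |x|)^(m-2)`,
it is enough that `(1 + |x|)^2 Δv ≤ c v^p`. The Keller–Osserman barriers
`A (R^2 - |x|^2)^(-q)`, `q = 2/(p-1)`, blow up on the sphere of radius `R`, so they dominate `u`
inside the ball whatever `u` does; taking `R = 2|x| + 2` this gives a bound `u ≤ M` independent
of `x` and `t`. A bounded solution then lies below `ε (1 + |x|^2)^σ` (with `σ` small in terms of
`ε`), which exceeds `M` on large spheres; letting `ε → 0` gives `u ≤ 0`.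
-/

open Set Filter Topology

/-- The `i`-th partial derivative of a function on `ℝ^d`. -/
noncomputable def pd {d : ℕ} (i : Fin d) (f : EuclideanSpace ℝ (Fin d) → ℝ)
    (x : EuclideanSpace ℝ (Fin d)) : ℝ :=
  fderiv ℝ f x (EuclideanSpace.single i 1)

/-- `f` is locally Hölder continuous. -/
def LocHolder {d : ℕ} (f : EuclideanSpace ℝ (Fin d) → ℝ) : Prop :=
  ∀ K : Set (EuclideanSpace ℝ (Fin d)), IsCompact K →
    ∃ κ C : ℝ, 0 < κ ∧ κ ≤ 1 ∧ 0 ≤ C ∧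
      ∀ x ∈ K, ∀ y ∈ K, |f x - f y| ≤ C * ‖x - y‖ ^ κ

section

local notation "ℝ^" d => EuclideanSpace ℝ (Fin d)

theorem deriv_nonneg_of_isMaxOn_Icc {f : ℝ → ℝ} {a b c : ℝ} (hc : c ∈ Ioc a b)
    (hf : DifferentiableAt ℝ f c) (hmax : IsMaxOn f (Icc a b) c) : 0 ≤ deriv f c := by
  have hseg : segment ℝ c a ⊆ Icc a b := by
    rw [segment_eq_Icc']
    exact Icc_subset_Icc (le_min hc.1.le le_rfl) (max_le hc.2 (hc.1.le.trans hc.2))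
  have := hmax.localize.hasFDerivWithinAt_nonpos hf.hasDerivAt.hasFDerivAt.hasFDerivWithinAt
    (sub_mem_posTangentConeAt_of_segment_subset hseg)
  simp only [ContinuousLinearMap.toSpanSingleton_apply, smul_eq_mul] at this
  nlinarith [hc.1]

theorem IsLocalMax.deriv_deriv_nonpos {g : ℝ → ℝ} {a : ℝ} (hmax : IsLocalMax g a)
    (hg : ∀ᶠ t in 𝓝 a, DifferentiableAt ℝ g t) : deriv (deriv g) a ≤ 0 := by
  by_contra! hpos
  have hincr : ∀ᶠ t in 𝓝[>] a, 0 < deriv g t := deriv_pos_right_of_sign_deriv <|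
    nhdsWithin_le_nhds <| eventually_nhdsWithin_sign_eq_of_deriv_pos hpos hmax.deriv_eq_zero
  obtain ⟨b, hab, hb⟩ := mem_nhdsGT_iff_exists_Ioc_subset.1
    (((hmax.and hg).filter_mono nhdsWithin_le_nhds).and hincr)
  have hmono : StrictMonoOn g (Icc a b) := by
    refine strictMonoOn_of_deriv_pos (convex_Icc a b) (fun t ht => ?_) (fun t ht => ?_)
    · rcases eq_or_lt_of_le ht.1 with rfl | hat
      · exact hg.self_of_nhds.continuousAt.continuousWithinAt
      · exact (hb ⟨hat, ht.2⟩).1.2.continuousAt.continuousWithinAt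
    · rw [interior_Icc] at ht
      exact (hb (Ioo_subset_Ioc_self ht)).2
  exact (hmono (left_mem_Icc.2 hab.le) (right_mem_Icc.2 hab.le) hab).not_ge
    (hb (right_mem_Ioc.2 hab)).1.1

theorem hasDerivAt_mul_rpow_sub {k b e s : ℝ} (hs : s < b) :
    HasDerivAt (fun s => k * (b - s) ^ e) (-(k * e) * (b - s) ^ (e - 1)) s :=
  ((((hasDerivAt_id s).const_sub b).rpow_const (p := e)
    (Or.inl (sub_pos.2 hs).ne')).const_mul k).congr_deriv (by simp only [id]; ring)

theorem hasDerivAt_mul_add_rpow {k b e s : ℝ} (hs : 0 < b + s) :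
    HasDerivAt (fun s => k * (b + s) ^ e) (k * e * (b + s) ^ (e - 1)) s :=
  ((((hasDerivAt_id s).const_add b).rpow_const (p := e) (Or.inl hs.ne')).const_mul k).congr_deriv
    (by simp only [id]; ring)

theorem rpow_mul_le_of_sq_mul_le {r m c a L W : ℝ} (hr : 0 ≤ r)
    (ha : c * (1 + r) ^ (m - 2) ≤ a) (hW : 0 ≤ W) (h : (1 + r) ^ 2 * L ≤ c * W) :
    (1 + r) ^ m * L ≤ a * W := by
  have hsplit : (1 + r) ^ m = (1 + r) ^ (m - 2) * (1 + r) ^ 2 := by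
    rw [← Real.rpow_natCast, ← Real.rpow_add (by linarith)]
    norm_num
  calc (1 + r) ^ m * L = (1 + r) ^ (m - 2) * ((1 + r) ^ 2 * L) := by rw [hsplit]; ring
    _ ≤ (1 + r) ^ (m - 2) * (c * W) := by gcongr
    _ = c * (1 + r) ^ (m - 2) * W := by ring
    _ ≤ a * W := by gcongr

theorem hasFDerivAt_comp_norm_sq {F : Type*} [NormedAddCommGroup F] [InnerProductSpace ℝ F]
    {h : ℝ → ℝ} {h' : ℝ} {x : F} (hh : HasDerivAt h h' (‖x‖ ^ 2)) :
    HasFDerivAt (fun y => h (‖y‖ ^ 2)) (h' • (2 • innerSL ℝ x)) x :=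
  hh.comp_hasFDerivAt x (hasStrictFDerivAt_norm_sq x).hasFDerivAt

variable {d : ℕ}

noncomputable def lap (f : (ℝ^d) → ℝ) (x : ℝ^d) : ℝ := ∑ i, pd i (pd i f) x

/-- Weaker than twice Fréchet differentiability: only the pure second partials `∂ᵢ∂ᵢ v` need to
exist at `x`. -/
def TwiceDifferentiableAt (v : (ℝ^d) → ℝ) (x : ℝ^d) : Prop :=
  (∀ᶠ y in 𝓝 x, DifferentiableAt ℝ v y) ∧ ∀ i, DifferentiableAt ℝ (pd i v) x

theorem ContDiff.twiceDifferentiableAt {f : (ℝ^d) → ℝ} (hf : ContDiff ℝ 2 f) (x : ℝ^d) :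
    TwiceDifferentiableAt f x :=
  ⟨.of_forall (hf.differentiable two_ne_zero), fun _ =>
    ((hf.fderiv_right (m := 1) (by norm_num)).clm_apply contDiff_const).differentiable
      one_ne_zero x⟩

theorem hasDerivAt_pd_line {f : (ℝ^d) → ℝ} {x : ℝ^d} (i : Fin d) {t : ℝ}
    (hf : DifferentiableAt ℝ f (x + t • EuclideanSpace.single i 1)) :
    HasDerivAt (fun s : ℝ => f (x + s • EuclideanSpace.single i 1))
      (pd i f (x + t • EuclideanSpace.single i 1)) t := by
  have hline := ((hasDerivAt_id t).smul_const (EuclideanSpace.single i (1 : ℝ))).const_add x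
  rw [one_smul] at hline
  exact hf.hasFDerivAt.comp_hasDerivAt t hline

theorem pd_pd_le_of_isLocalMax_sub {f g : (ℝ^d) → ℝ} {x : ℝ^d} (i : Fin d)
    (hmax : IsLocalMax (fun y => f y - g y) x)
    (hf : ∀ᶠ y in 𝓝 x, DifferentiableAt ℝ f y) (hg : ∀ᶠ y in 𝓝 x, DifferentiableAt ℝ g y)
    (hf' : DifferentiableAt ℝ (pd i f) x) (hg' : DifferentiableAt ℝ (pd i g) x) :
    pd i (pd i f) x ≤ pd i (pd i g) x := by
  set γ : ℝ → ℝ^d := fun t => x + t • EuclideanSpace.single i 1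
  have hγ : Continuous γ := by fun_prop
  have hγ0 : γ 0 = x := by simp [γ]
  have hd1 : ∀ᶠ t in 𝓝 0, HasDerivAt (fun t => f (γ t) - g (γ t))
      (pd i f (γ t) - pd i g (γ t)) t := by
    filter_upwards [hγ.continuousAt.tendsto.eventually (hγ0 ▸ hf.and hg)] with t ht
    exact (hasDerivAt_pd_line i ht.1).sub (hasDerivAt_pd_line i ht.2)
  have hd2 : HasDerivAt (fun t => pd i f (γ t) - pd i g (γ t))
      (pd i (pd i f) x - pd i (pd i g) x) 0 := by
    rw [← hγ0] at hf' hg' ⊢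
    exact (hasDerivAt_pd_line i hf').sub (hasDerivAt_pd_line i hg')
  have hmax' : IsLocalMax (fun t => f (γ t) - g (γ t)) 0 :=
    (hγ0 ▸ hmax).comp_continuous hγ.continuousAt
  have := hmax'.deriv_deriv_nonpos (hd1.mono fun t ht => ht.differentiableAt)
  rw [(hd2.congr_of_eventuallyEq (hd1.mono fun t ht => ht.deriv)).deriv] at this
  linarith

theorem lap_le_of_isLocalMax_sub {f g : (ℝ^d) → ℝ} {x : ℝ^d}
    (hmax : IsLocalMax (fun y => f y - g y) x) (hf : TwiceDifferentiableAt f x)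
    (hg : TwiceDifferentiableAt g x) : lap f x ≤ lap g x :=
  Finset.sum_le_sum fun i _ => pd_pd_le_of_isLocalMax_sub i hmax hf.1 hg.1 (hf.2 i) (hg.2 i)

theorem pd_comp_norm_sq {h : ℝ → ℝ} {h' : ℝ} {x : ℝ^d} (i : Fin d)
    (hh : HasDerivAt h h' (‖x‖ ^ 2)) : pd i (fun y => h (‖y‖ ^ 2)) x = 2 * h' * x i := by
  simp [pd, (hasFDerivAt_comp_norm_sq hh).fderiv, EuclideanSpace.inner_single_right]
  ring

section Radial

variable {g g₁ g₂ : ℝ → ℝ} {S : Set ℝ} {x : ℝ^d}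

theorem pd_radial_eventuallyEq (hS : IsOpen S) (hg : ∀ s ∈ S, HasDerivAt g (g₁ s) s)
    (hx : ‖x‖ ^ 2 ∈ S) (i : Fin d) :
    pd i (fun y => g (‖y‖ ^ 2)) =ᶠ[𝓝 x] fun y => 2 * g₁ (‖y‖ ^ 2) * y i := by
  filter_upwards [(hS.preimage (by fun_prop : Continuous fun y : ℝ^d => ‖y‖ ^ 2)).mem_nhds hx]
    with y hy
  exact pd_comp_norm_sq i (hg _ hy)

theorem hasFDerivAt_pd_radial (hg₁ : ∀ s ∈ S, HasDerivAt g₁ (g₂ s) s) (hx : ‖x‖ ^ 2 ∈ S)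
    (i : Fin d) :
    HasFDerivAt (fun y : ℝ^d => 2 * g₁ (‖y‖ ^ 2) * y i)
      ((2 * g₁ (‖x‖ ^ 2)) • PiLp.proj 2 _ i
        + x i • (2 : ℝ) • (g₂ (‖x‖ ^ 2) • (2 • innerSL ℝ x))) x :=
  ((hasFDerivAt_comp_norm_sq (hg₁ _ hx)).const_mul 2).mul (PiLp.hasFDerivAt_apply 2 x i)

theorem twiceDifferentiableAt_radial (hS : IsOpen S) (hg : ∀ s ∈ S, HasDerivAt g (g₁ s) s)
    (hg₁ : ∀ s ∈ S, HasDerivAt g₁ (g₂ s) s) (hx : ‖x‖ ^ 2 ∈ S) :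
    TwiceDifferentiableAt (fun y => g (‖y‖ ^ 2)) x := by
  refine ⟨?_, fun i => (pd_radial_eventuallyEq hS hg hx i).differentiableAt_iff.2
    (hasFDerivAt_pd_radial hg₁ hx i).differentiableAt⟩
  filter_upwards [(hS.preimage (by fun_prop : Continuous fun y : ℝ^d => ‖y‖ ^ 2)).mem_nhds hx]
    with y hy
  exact (hasFDerivAt_comp_norm_sq (hg _ hy)).differentiableAt

theorem lap_radial (hS : IsOpen S) (hg : ∀ s ∈ S, HasDerivAt g (g₁ s) s)
    (hg₁ : ∀ s ∈ S, HasDerivAt g₁ (g₂ s) s) (hx : ‖x‖ ^ 2 ∈ S) :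
    lap (fun y => g (‖y‖ ^ 2)) x = 4 * ‖x‖ ^ 2 * g₂ (‖x‖ ^ 2) + 2 * d * g₁ (‖x‖ ^ 2) := by
  have hterm : ∀ i, pd i (pd i (fun y => g (‖y‖ ^ 2))) x
      = 4 * g₂ (‖x‖ ^ 2) * x i ^ 2 + 2 * g₁ (‖x‖ ^ 2) := by
    intro i
    rw [pd, (pd_radial_eventuallyEq hS hg hx i).fderiv_eq, (hasFDerivAt_pd_radial hg₁ hx i).fderiv]
    simp [EuclideanSpace.inner_single_right]
    ring
  simp only [lap, hterm, Finset.sum_add_distrib, ← Finset.mul_sum,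
    ← EuclideanSpace.real_norm_sq_eq, Finset.sum_const, Finset.card_univ, Fintype.card_fin,
    nsmul_eq_mul]
  ring

end Radial

structure IsClassicalSolution (a α : (ℝ^d) → ℝ) (p : ℝ) (u : (ℝ^d) → ℝ → ℝ) : Prop where
  continuousOn : ContinuousOn (fun q : (ℝ^d) × ℝ => u q.1 q.2) (univ ×ˢ Ici 0)
  contDiff_space : ∀ t, 0 < t → ContDiff ℝ 2 (fun x => u x t)
  contDiffOn_time : ∀ x, ContDiffOn ℝ 1 (fun s => u x s) (Ioi 0)
  pde : ∀ x t, 0 < t →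
    deriv (fun s => u x s) t = a x * lap (fun y => u y t) x - α x * u x t ^ p

namespace IsClassicalSolution

variable {a α : (ℝ^d) → ℝ} {p : ℝ} {u : (ℝ^d) → ℝ → ℝ}

theorem le_of_supersolution (hu : IsClassicalSolution a α p u) (ha : ∀ x, 0 ≤ a x)
    (hα : ∀ x, 0 < α x) (hp : 0 < p) {ρ T : ℝ} {v : (ℝ^d) → ℝ}
    (hv : ∀ x, ‖x‖ ≤ ρ → TwiceDifferentiableAt v x)
    (hv_nonneg : ∀ x, ‖x‖ ≤ ρ → 0 ≤ v x)
    (hv_super : ∀ x, ‖x‖ ≤ ρ → a x * lap v x ≤ α x * v x ^ p)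
    (hinit : ∀ x, ‖x‖ ≤ ρ → u x 0 ≤ v x)
    (hbdry : ∀ x, ‖x‖ = ρ → ∀ t ∈ Icc 0 T, u x t < v x)
    {x : ℝ^d} (hx : ‖x‖ ≤ ρ) {t : ℝ} (ht : t ∈ Icc 0 T) : u x t ≤ v x := by
  have hcont : ContinuousOn (fun q : (ℝ^d) × ℝ => u q.1 q.2 - v q.1)
      (Metric.closedBall 0 ρ ×ˢ Icc 0 T) := by
    refine (hu.continuousOn.mono fun q hq => ⟨trivial, hq.2.1⟩).sub fun q hq => ?_
    have hq : ‖q.1‖ ≤ ρ := by simpa using hq.1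
    exact ((hv _ hq).1.self_of_nhds.continuousAt.comp continuousAt_fst).continuousWithinAt
  obtain ⟨⟨x₀, t₀⟩, ⟨hx₀, ht₀⟩, hmax⟩ :=
    ((isCompact_closedBall 0 ρ).prod isCompact_Icc).exists_isMaxOn
      ⟨(x, t), by simpa using hx, ht⟩ hcont
  replace hx₀ : ‖x₀‖ ≤ ρ := by simpa using hx₀
  have hmax' : ∀ y, ‖y‖ ≤ ρ → ∀ s ∈ Icc 0 T, u y s - v y ≤ u x₀ t₀ - v x₀ :=
    fun y hy s hs => isMaxOn_iff.1 hmax (y, s) ⟨by simpa using hy, hs⟩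
  suffices u x₀ t₀ ≤ v x₀ by linarith [hmax' x hx t ht]
  by_contra! hlt
  have hx₀ρ : ‖x₀‖ < ρ :=
    hx₀.lt_of_ne fun h => (hbdry x₀ h t₀ ht₀).not_ge hlt.le
  have ht₀ : t₀ ∈ Ioc 0 T :=
    ⟨ht₀.1.lt_of_ne fun h => by linarith [h ▸ hinit x₀ hx₀], ht₀.2⟩
  have htime : 0 ≤ deriv (fun s => u x₀ s) t₀ :=
    deriv_nonneg_of_isMaxOn_Icc ht₀
      (((hu.contDiffOn_time x₀).contDiffAt (Ioi_mem_nhds ht₀.1)).differentiableAt one_ne_zero)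
      (isMaxOn_iff.2 fun s hs => by linarith [hmax' x₀ hx₀ s hs])
  have hspace : lap (fun y => u y t₀) x₀ ≤ lap v x₀ := by
    refine lap_le_of_isLocalMax_sub ?_
      ((hu.contDiff_space t₀ ht₀.1).twiceDifferentiableAt x₀) (hv x₀ hx₀)
    filter_upwards [Metric.isOpen_ball.mem_nhds (mem_ball_zero_iff.2 hx₀ρ)] with y hy
    exact hmax' y (mem_ball_zero_iff.1 hy).le t₀ ⟨ht₀.1.le, ht₀.2⟩
  have hpow : α x₀ * v x₀ ^ p < α x₀ * u x₀ t₀ ^ p :=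
    mul_lt_mul_of_pos_left (Real.rpow_lt_rpow (hv_nonneg x₀ hx₀) hlt hp) (hα x₀)
  have := mul_le_mul_of_nonneg_left hspace (ha x₀)
  linarith [hu.pde x₀ t₀ ht₀.1, hv_super x₀ hx₀]

theorem le_of_supersolution_of_blowup (hu : IsClassicalSolution a α p u) (ha : ∀ x, 0 ≤ a x)
    (hα : ∀ x, 0 < α x) (hp : 0 < p) {R : ℝ} {v : (ℝ^d) → ℝ}
    (hv : ∀ x, ‖x‖ < R → TwiceDifferentiableAt v x) (hv_nonneg : ∀ x, ‖x‖ < R → 0 ≤ v x)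
    (hv_super : ∀ x, ‖x‖ < R → a x * lap v x ≤ α x * v x ^ p)
    (hinit : ∀ x, ‖x‖ < R → u x 0 ≤ v x)
    (hblow : ∀ M, ∀ᶠ r in 𝓝[<] R, ∀ y : ℝ^d, ‖y‖ = r → M < v y)
    {x : ℝ^d} (hx : ‖x‖ < R) {t : ℝ} (ht : 0 ≤ t) : u x t ≤ v x := by
  obtain ⟨M, hM⟩ := ((isCompact_closedBall (0 : ℝ^d) R).prod (isCompact_Icc (a := 0) (b := t))
    ).bddAbove_image (hu.continuousOn.mono fun q hq => ⟨trivial, hq.2.1⟩)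
  obtain ⟨r, hrM, hxr, hrR⟩ := ((hblow M).and (Ioo_mem_nhdsLT hx)).exists
  have hr : ∀ y : ℝ^d, ‖y‖ ≤ r → ‖y‖ < R := fun y hy => hy.trans_lt hrR
  refine hu.le_of_supersolution ha hα hp (fun y hy => hv y (hr y hy))
    (fun y hy => hv_nonneg y (hr y hy)) (fun y hy => hv_super y (hr y hy))
    (fun y hy => hinit y (hr y hy)) (fun y hy s hs => ?_) hxr.le ⟨ht, le_rfl⟩
  exact (hM ⟨(y, s), ⟨by simpa [hy] using hrR.le, hs⟩, rfl⟩).trans_lt (hrM y hy)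

theorem le_of_supersolution_of_bounded (hu : IsClassicalSolution a α p u) (ha : ∀ x, 0 ≤ a x)
    (hα : ∀ x, 0 < α x) (hp : 0 < p) {M : ℝ} (hM : ∀ x t, 0 ≤ t → u x t ≤ M)
    {v : (ℝ^d) → ℝ} (hv : ∀ x, TwiceDifferentiableAt v x) (hv_nonneg : ∀ x, 0 ≤ v x)
    (hv_super : ∀ x, a x * lap v x ≤ α x * v x ^ p) (hinit : ∀ x, u x 0 ≤ v x)
    (hlarge : ∀ᶠ r in atTop, ∀ y : ℝ^d, ‖y‖ = r → M < v y)
    (x : ℝ^d) {t : ℝ} (ht : 0 ≤ t) : u x t ≤ v x := by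
  obtain ⟨r, hrM, hxr⟩ := (hlarge.and (eventually_ge_atTop ‖x‖)).exists
  exact hu.le_of_supersolution ha hα hp (fun y _ => hv y) (fun y _ => hv_nonneg y)
    (fun y _ => hv_super y) (fun y _ => hinit y)
    (fun y hy s hs => (hM y s hs.1).trans_lt (hrM y hy)) hxr ⟨ht, le_rfl⟩

end IsClassicalSolution

section Barriers

variable {A R q ε σ : ℝ}

theorem hasDerivAt_blowup {s : ℝ} (hs : s < R ^ 2) :
    HasDerivAt (fun s => A * (R ^ 2 - s) ^ (-q)) (A * q * (R ^ 2 - s) ^ (-q - 1)) s :=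
  (hasDerivAt_mul_rpow_sub hs).congr_deriv (by ring_nf)

theorem hasDerivAt_blowup_deriv {s : ℝ} (hs : s < R ^ 2) :
    HasDerivAt (fun s => A * q * (R ^ 2 - s) ^ (-q - 1))
      (A * (q * (q + 1)) * (R ^ 2 - s) ^ (-q - 2)) s :=
  (hasDerivAt_mul_rpow_sub hs).congr_deriv (by ring_nf)

theorem hasDerivAt_growth {s : ℝ} (hs : -1 < s) :
    HasDerivAt (fun s => ε * (1 + s) ^ σ) (ε * σ * (1 + s) ^ (σ - 1)) s :=
  hasDerivAt_mul_add_rpow (by linarith)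

theorem hasDerivAt_growth_deriv {s : ℝ} (hs : -1 < s) :
    HasDerivAt (fun s => ε * σ * (1 + s) ^ (σ - 1)) (ε * σ * (σ - 1) * (1 + s) ^ (σ - 2)) s :=
  (hasDerivAt_mul_add_rpow (by linarith)).congr_deriv (by ring_nf)

theorem lap_blowup_barrier_le {p c : ℝ} (hq : 0 < q) (hpq : q * p = q + 2) (hA : 0 < A)
    (hA' : (2 * q * d + 4 * q * (q + 1)) * (R * (1 + R)) ^ 2 ≤ c * A ^ (p - 1))
    {x : ℝ^d} (hx : ‖x‖ < R) :
    (1 + ‖x‖) ^ 2 * lap (fun y => A * (R ^ 2 - ‖y‖ ^ 2) ^ (-q)) x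
      ≤ c * (A * (R ^ 2 - ‖x‖ ^ 2) ^ (-q)) ^ p := by
  have hxR : ‖x‖ ^ 2 < R ^ 2 := pow_lt_pow_left₀ hx (norm_nonneg x) two_ne_zero
  rw [lap_radial isOpen_Iio (fun s hs => hasDerivAt_blowup hs)
    (fun s hs => hasDerivAt_blowup_deriv hs) hxR]
  set X := R ^ 2 - ‖x‖ ^ 2
  have hX : 0 < X := sub_pos.2 hxR
  have hX' : X ^ (-q - 1) = X ^ (-q - 2) * X := by
    rw [← Real.rpow_add_one hX.ne']; ring_nf
  -- `q p = q + 2` is what makes `v ^ p` and `Δv` scale alike in `X`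
  have hpow : (A * X ^ (-q)) ^ p = A ^ (p - 1) * A * X ^ (-q - 2) := by
    rw [Real.mul_rpow hA.le (by positivity), ← Real.rpow_mul hX.le, Real.rpow_sub_one hA.ne',
      div_mul_cancel₀ _ hA.ne', neg_mul, hpq, neg_add']
  have hbound : (1 + ‖x‖) ^ 2 * (4 * (q * (q + 1)) * ‖x‖ ^ 2 + 2 * d * q * X)
      ≤ (2 * q * d + 4 * q * (q + 1)) * (R * (1 + R)) ^ 2 := by
    have h1 : (1 + ‖x‖) ^ 2 ≤ (1 + R) ^ 2 := by gcongr
    have h2 : 4 * (q * (q + 1)) * ‖x‖ ^ 2 + 2 * d * q * X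
        ≤ (2 * q * d + 4 * q * (q + 1)) * R ^ 2 := by
      have : X ≤ R ^ 2 := sub_le_self _ (sq_nonneg _)
      calc _ ≤ 4 * (q * (q + 1)) * R ^ 2 + 2 * d * q * R ^ 2 := by gcongr
        _ = _ := by ring
    calc _ ≤ (1 + R) ^ 2 * ((2 * q * d + 4 * q * (q + 1)) * R ^ 2) := by gcongr
      _ = _ := by ring
  calc _ = A * X ^ (-q - 2) * ((1 + ‖x‖) ^ 2 * (4 * (q * (q + 1)) * ‖x‖ ^ 2 + 2 * d * q * X)) := by
        rw [hX']; ring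
    _ ≤ A * X ^ (-q - 2) * (c * A ^ (p - 1)) :=
        mul_le_mul_of_nonneg_left (hbound.trans hA') (by positivity)
    _ = c * (A * X ^ (-q)) ^ p := by rw [hpow]; ring

theorem lap_growth_barrier_le {p c : ℝ} (hp : 1 ≤ p) (hc : 0 ≤ c) (hε : 0 < ε) (hσ : 0 < σ)
    (hσ1 : σ ≤ 1) (hσc : 4 * d * σ ≤ c * ε ^ (p - 1)) (x : ℝ^d) :
    (1 + ‖x‖) ^ 2 * lap (fun y => ε * (1 + ‖y‖ ^ 2) ^ σ) x
      ≤ c * (ε * (1 + ‖x‖ ^ 2) ^ σ) ^ p := by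
  have hx : ‖x‖ ^ 2 ∈ Ioi (-1) := mem_Ioi.2 (neg_one_lt_zero.trans_le (sq_nonneg _))
  rw [lap_radial isOpen_Ioi (fun s hs => hasDerivAt_growth hs)
    (fun s hs => hasDerivAt_growth_deriv hs) hx]
  set Y := 1 + ‖x‖ ^ 2
  have hY : 1 ≤ Y := le_add_of_nonneg_right (sq_nonneg _)
  have hconcave : 4 * ‖x‖ ^ 2 * (ε * σ * (σ - 1) * Y ^ (σ - 2)) ≤ 0 :=
    mul_nonpos_of_nonneg_of_nonpos (by positivity) <| mul_nonpos_of_nonpos_of_nonneg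
      (mul_nonpos_of_nonneg_of_nonpos (by positivity) (by linarith)) (by positivity)
  have hY' : Y ^ (σ - 1) * Y = Y ^ σ := by
    rw [Real.rpow_sub_one (by positivity), div_mul_cancel₀ _ (by positivity)]
  have hεp : ε ^ (p - 1) * ε = ε ^ p := by
    rw [Real.rpow_sub_one hε.ne', div_mul_cancel₀ _ hε.ne']
  have hsq : (1 + ‖x‖) ^ 2 ≤ 2 * Y := by nlinarith [sq_nonneg (1 - ‖x‖)]
  calc _ ≤ (1 + ‖x‖) ^ 2 * (2 * d * (ε * σ * Y ^ (σ - 1))) := by gcongr; linarith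
    _ ≤ 2 * Y * (2 * d * (ε * σ * Y ^ (σ - 1))) := by gcongr
    _ = 4 * d * σ * ε * (Y ^ (σ - 1) * Y) := by ring
    _ ≤ c * ε ^ (p - 1) * ε * Y ^ σ := by rw [hY']; gcongr
    _ ≤ c * ε ^ p * Y ^ (σ * p) := by
        rw [mul_assoc c, hεp]
        exact mul_le_mul_of_nonneg_left
          (Real.rpow_le_rpow_of_exponent_le hY (le_mul_of_one_le_right hσ.le hp)) (by positivity)
    _ = c * (ε * Y ^ σ) ^ p := by
        rw [Real.mul_rpow hε.le (by positivity), ← Real.rpow_mul (by positivity)]; ring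

theorem eventually_lt_blowup (hR : 0 < R) (hA : 0 < A) (hq : 0 < q) (M : ℝ) :
    ∀ᶠ r in 𝓝[<] R, ∀ y : ℝ^d, ‖y‖ = r → M < A * (R ^ 2 - ‖y‖ ^ 2) ^ (-q) := by
  have hgap : Tendsto (fun r => R ^ 2 - r ^ 2) (𝓝[<] R) (𝓝[>] 0) := by
    refine tendsto_nhdsWithin_iff.2 ⟨?_, ?_⟩
    · have hcont : Continuous fun r : ℝ => R ^ 2 - r ^ 2 := by fun_prop
      simpa using (hcont.tendsto R).mono_left nhdsWithin_le_nhds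
    · filter_upwards [Ioo_mem_nhdsLT hR] with r hr
      exact sub_pos.2 (pow_lt_pow_left₀ hr.2 hr.1.le two_ne_zero)
  filter_upwards [(((tendsto_rpow_neg_nhdsGT_zero (neg_neg_of_pos hq)).comp hgap
    ).const_mul_atTop hA).eventually_gt_atTop M] with r hr y hy
  simpa [hy] using hr

theorem eventually_lt_growth (hε : 0 < ε) (hσ : 0 < σ) (M : ℝ) :
    ∀ᶠ r in atTop, ∀ y : ℝ^d, ‖y‖ = r → M < ε * (1 + ‖y‖ ^ 2) ^ σ := by
  filter_upwards [(((tendsto_rpow_atTop hσ).comp (tendsto_atTop_add_const_left _ 1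
    (tendsto_pow_atTop two_ne_zero))).const_mul_atTop hε).eventually_gt_atTop M] with r hr y hy
  simpa [hy] using hr

end Barriers

section Proposition

variable {m c p : ℝ} {α : (ℝ^d) → ℝ} {u : (ℝ^d) → ℝ → ℝ}

theorem IsClassicalSolution.le_blowup_barrier
    (hu : IsClassicalSolution (fun x => (1 + ‖x‖) ^ m) α p u) (hc : 0 < c)
    (hα : ∀ x, c * (1 + ‖x‖) ^ (m - 2) ≤ α x) (hp : 1 < p) (hinit : ∀ x, u x 0 = 0)
    {q R A : ℝ} (hq : 0 < q) (hpq : q * p = q + 2) (hR : 0 < R) (hA : 0 < A)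
    (hA' : (2 * q * d + 4 * q * (q + 1)) * (R * (1 + R)) ^ 2 ≤ c * A ^ (p - 1))
    {x : ℝ^d} (hx : ‖x‖ < R) {t : ℝ} (ht : 0 ≤ t) :
    u x t ≤ A * (R ^ 2 - ‖x‖ ^ 2) ^ (-q) := by
  have hgap : ∀ y : ℝ^d, ‖y‖ < R → ‖y‖ ^ 2 < R ^ 2 := fun y hy =>
    pow_lt_pow_left₀ hy (norm_nonneg y) two_ne_zero
  have hv_nonneg : ∀ y : ℝ^d, ‖y‖ < R → 0 ≤ A * (R ^ 2 - ‖y‖ ^ 2) ^ (-q) := fun y hy =>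
    mul_nonneg hA.le (Real.rpow_nonneg (sub_pos.2 (hgap y hy)).le _)
  refine hu.le_of_supersolution_of_blowup (fun _ => by positivity)
    (fun y => (by positivity : 0 < c * (1 + ‖y‖) ^ (m - 2)).trans_le (hα y)) (by linarith)
    (fun y hy => twiceDifferentiableAt_radial isOpen_Iio (fun s hs => hasDerivAt_blowup hs)
      (fun s hs => hasDerivAt_blowup_deriv hs) (hgap y hy)) hv_nonneg
    (fun y hy => rpow_mul_le_of_sq_mul_le (norm_nonneg y) (hα y)
      (Real.rpow_nonneg (hv_nonneg y hy) _) (lap_blowup_barrier_le hq hpq hA hA' hy))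
    (fun y hy => (hinit y).trans_le (hv_nonneg y hy)) (eventually_lt_blowup hR hA hq) hx ht

theorem IsClassicalSolution.exists_forall_le
    (hu : IsClassicalSolution (fun x => (1 + ‖x‖) ^ m) α p u) (hc : 0 < c)
    (hα : ∀ x, c * (1 + ‖x‖) ^ (m - 2) ≤ α x) (hp : 1 < p) (hinit : ∀ x, u x 0 = 0) :
    ∃ M, ∀ x t, 0 ≤ t → u x t ≤ M := by
  set q := 2 / (p - 1)
  have hq : 0 < q := div_pos two_pos (sub_pos.2 hp)
  have hq' : q * (p - 1) = 2 := div_mul_cancel₀ _ (sub_pos.2 hp).ne'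
  set C := 2 * q * d + 4 * q * (q + 1)
  set K := (C / c) ^ (p - 1)⁻¹
  have hK : 0 < K := by positivity
  have hKp : c * K ^ (p - 1) = C := by
    rw [← Real.rpow_mul (by positivity), inv_mul_cancel₀ (sub_pos.2 hp).ne', Real.rpow_one,
      mul_div_cancel₀ _ hc.ne']
  refine ⟨K * 2 ^ q, fun x t ht => ?_⟩
  set R := 2 * ‖x‖ + 2
  set B := R * (1 + R)
  have hA' : C * B ^ 2 ≤ c * (K * B ^ q) ^ (p - 1) := by
    rw [Real.mul_rpow hK.le (by positivity), ← Real.rpow_mul (x := B) (by positivity), hq',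
      Real.rpow_two, ← mul_assoc, hKp]
  have hX : 0 < R ^ 2 - ‖x‖ ^ 2 := by nlinarith [norm_nonneg x]
  have hB : B ≤ 2 * (R ^ 2 - ‖x‖ ^ 2) := by nlinarith [norm_nonneg x]
  calc u x t ≤ K * B ^ q * (R ^ 2 - ‖x‖ ^ 2) ^ (-q) :=
        hu.le_blowup_barrier hc hα hp hinit hq (by linear_combination hq') (by positivity)
          (by positivity) hA' (by linarith [norm_nonneg x]) ht
    _ ≤ K * (2 * (R ^ 2 - ‖x‖ ^ 2)) ^ q * (R ^ 2 - ‖x‖ ^ 2) ^ (-q) := by gcongr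
    _ = K * 2 ^ q := by
        rw [Real.mul_rpow zero_le_two hX.le, Real.rpow_neg hX.le]
        field_simp

theorem IsClassicalSolution.le_growth_barrier
    (hu : IsClassicalSolution (fun x => (1 + ‖x‖) ^ m) α p u) (hc : 0 < c)
    (hα : ∀ x, c * (1 + ‖x‖) ^ (m - 2) ≤ α x) (hp : 1 < p) (hinit : ∀ x, u x 0 = 0)
    {M : ℝ} (hM : ∀ x t, 0 ≤ t → u x t ≤ M) {ε σ : ℝ} (hε : 0 < ε) (hσ : 0 < σ)
    (hσ1 : σ ≤ 1) (hσc : 4 * d * σ ≤ c * ε ^ (p - 1)) (x : ℝ^d) {t : ℝ} (ht : 0 ≤ t) :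
    u x t ≤ ε * (1 + ‖x‖ ^ 2) ^ σ :=
  hu.le_of_supersolution_of_bounded (fun _ => by positivity)
    (fun y => (by positivity : 0 < c * (1 + ‖y‖) ^ (m - 2)).trans_le (hα y)) (by linarith) hM
    (fun y => twiceDifferentiableAt_radial isOpen_Ioi (fun s hs => hasDerivAt_growth hs)
      (fun s hs => hasDerivAt_growth_deriv hs) (mem_Ioi.2 (neg_one_lt_zero.trans_le (sq_nonneg _))))
    (fun _ => by positivity)
    (fun y => rpow_mul_le_of_sq_mul_le (norm_nonneg y) (hα y) (by positivity)
      (lap_growth_barrier_le hp.le hc.le hε hσ hσ1 hσc y))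
    (fun y => by rw [hinit]; positivity) (eventually_lt_growth hε hσ M) x ht

theorem IsClassicalSolution.nonpos
    (hu : IsClassicalSolution (fun x => (1 + ‖x‖) ^ m) α p u) (hc : 0 < c)
    (hα : ∀ x, c * (1 + ‖x‖) ^ (m - 2) ≤ α x) (hp : 1 < p) (hinit : ∀ x, u x 0 = 0)
    (x : ℝ^d) {t : ℝ} (ht : 0 ≤ t) : u x t ≤ 0 := by
  obtain ⟨M, hM⟩ := hu.exists_forall_le hc hα hp hinit
  refine le_of_forall_pos_le_add fun δ hδ => ?_
  set Y := 1 + ‖x‖ ^ 2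
  have hY : 1 ≤ Y := le_add_of_nonneg_right (sq_nonneg _)
  set ε := δ / Y
  have hε : 0 < ε := by positivity
  set σ := min 1 (c * ε ^ (p - 1) / (4 * d + 1))
  have hσ : 0 < σ := lt_min one_pos (by positivity)
  have hσc : 4 * d * σ ≤ c * ε ^ (p - 1) :=
    calc 4 * d * σ ≤ (4 * d + 1) * (c * ε ^ (p - 1) / (4 * d + 1)) := by
          gcongr; · linarith
          exact min_le_right _ _
      _ = c * ε ^ (p - 1) := mul_div_cancel₀ _ (by positivity)
  calc u x t ≤ ε * Y ^ σ :=
        hu.le_growth_barrier hc hα hp hinit hM hε hσ (min_le_left _ _) hσc x ht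
    _ ≤ ε * Y := by gcongr; exact Real.rpow_le_self_of_one_le hY (min_le_left _ _)
    _ = 0 + δ := by rw [zero_add]; exact div_mul_cancel₀ _ (by positivity)

end Proposition

end

theorem stmt_11_general {d : ℕ} (p : ℝ) (hp1 : 1 < p)
    (m : ℝ)
    (α : EuclideanSpace ℝ (Fin d) → ℝ)
    (c : ℝ) (hc : 0 < c)
    (hα_lower : ∀ x, c * (1 + ‖x‖) ^ (m - 2) ≤ α x)
    (u : EuclideanSpace ℝ (Fin d) → ℝ → ℝ)
    (hu_cont : ContinuousOn (fun q : EuclideanSpace ℝ (Fin d) × ℝ => u q.1 q.2)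
      (univ ×ˢ Ici (0 : ℝ)))
    (hu_nonneg : ∀ x t, 0 ≤ t → 0 ≤ u x t)
    (hu_x : ∀ t : ℝ, 0 < t → ContDiff ℝ 2 (fun x => u x t))
    (hu_t : ∀ x, ContDiffOn ℝ 1 (fun s => u x s) (Ioi (0 : ℝ)))
    (hpde : ∀ x t, 0 < t →
      deriv (fun s => u x s) t =
        (1 + ‖x‖) ^ m * (∑ i, pd i (pd i (fun y => u y t)) x)
          - α x * u x t ^ p)
    (hinit : ∀ x, u x 0 = 0) :
    ∀ x t, 0 ≤ t → u x t = 0 := by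
  have hu : IsClassicalSolution (fun x => (1 + ‖x‖) ^ m) α p u := ⟨hu_cont, hu_x, hu_t, hpde⟩
  exact fun x t ht => le_antisymm (hu.nonpos hc hα_lower hp1 hinit x ht) (hu_nonneg x t ht)

/-- Proposition 1: for `L = (1+|x|)^m Δ` and
`α(x) ≥ c(1+|x|)^{m−2}`, the only nonnegative classical solution of
`u_t = (1+|x|)^m Δu − αu^p` with zero initial data is `u ≡ 0`. -/
theorem stmt_11 {d : ℕ} (hd : 1 ≤ d) (p : ℝ) (hp1 : 1 < p) (hp2 : p ≤ 2)
    (m : ℝ)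
    (α : EuclideanSpace ℝ (Fin d) → ℝ) (hα_holder : LocHolder α)
    (c : ℝ) (hc : 0 < c)
    (hα_lower : ∀ x, c * (1 + ‖x‖) ^ (m - 2) ≤ α x)
    (u : EuclideanSpace ℝ (Fin d) → ℝ → ℝ)
    (hu_cont : ContinuousOn (fun q : EuclideanSpace ℝ (Fin d) × ℝ => u q.1 q.2)
      (univ ×ˢ Ici (0 : ℝ)))
    (hu_nonneg : ∀ x t, 0 ≤ t → 0 ≤ u x t)
    (hu_x : ∀ t : ℝ, 0 < t → ContDiff ℝ 2 (fun x => u x t))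
    (hu_t : ∀ x, ContDiffOn ℝ 1 (fun s => u x s) (Ioi (0 : ℝ)))
    (hpde : ∀ x t, 0 < t →
      deriv (fun s => u x s) t =
        (1 + ‖x‖) ^ m * (∑ i, pd i (pd i (fun y => u y t)) x)
          - α x * u x t ^ p)
    (hinit : ∀ x, u x 0 = 0) :
    ∀ x t, 0 ≤ t → u x t = 0 :=
  stmt_11_general p hp1 m α c hc hα_lower u hu_cont hu_nonneg hu_x hu_t hpde hinit
end

section
/- Let d ≥ 1, p > 1, and c > 0. Then the only nonnegative, twice continuously differentiable function W : ℝ^d → ℝ satisfying ΔW(x) = c(1+|x|)^{−2} W(x)^p for all x ∈ ℝ^d is W ≡ 0. -/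
/-!
Comparison with radial barriers `κ (a + b‖x‖²)^m`. If such a barrier `φ` is a supersolution of
`Δφ ≤ c (1+|x|)^{-2} φ^p` on a ball and dominates `W` on its boundary, then `W ≤ φ` on the ball:
at an interior maximum of `W - φ` the second derivatives along the coordinate axes give
`ΔW ≤ Δφ`, hence `W^p ≤ φ^p`.

With `μ = 2/(p-1)`, the Keller–Osserman barrier `κ (1 - |x|²/R²)^{-μ}` blows up on the sphere of
radius `R`, and for a suitable `κ` independent of `R` it bounds `W` on the ball of radius `R/√2` by
`κ 2^μ`; so `W` is bounded above. A bounded `W` then lies below the slowly growing barriers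
`ε (1+|x|²)^s`, `0 < s ≤ 1`, whenever `ε^{p-1} ≥ 4ds/c`. Letting `s → 0` (and `ε → 0` with it)
gives `W ≤ 0`.
-/

open Set

open Filter Topology

theorem IsLocalMax.deriv_deriv_nonpos_s13 {f : ℝ → ℝ} {a : ℝ} (h : IsLocalMax f a)
    (hc : ContinuousAt f a) : deriv (deriv f) a ≤ 0 := by
  by_contra! hpos
  have hmin := isLocalMin_of_deriv_deriv_pos hpos h.deriv_eq_zero hc
  have hconst : f =ᶠ[𝓝 a] fun _ ↦ f a := (h.and hmin).mono fun _ hx ↦ le_antisymm hx.1 hx.2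
  rw [hconst.deriv.deriv_eq] at hpos
  simp at hpos

theorem IsCompact.le_of_forall_isLocalMax_le {X α : Type*} [TopologicalSpace X] [LinearOrder α]
    [TopologicalSpace α] [ClosedIciTopology α] {K : Set X} (hK : IsCompact K) {f : X → α} {a : α}
    (hf : ContinuousOn f K) (hbdry : ∀ x ∈ K \ interior K, f x ≤ a)
    (hmax : ∀ x ∈ interior K, IsLocalMax f x → f x ≤ a) : ∀ x ∈ K, f x ≤ a := by
  intro x hx
  obtain ⟨m, hmK, hm⟩ := hK.exists_isMaxOn ⟨x, hx⟩ hf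
  refine (hm hx).trans ?_
  by_cases hm_int : m ∈ interior K
  · exact hmax m hm_int (hm.isLocalMax (mem_interior_iff_mem_nhds.mp hm_int))
  · exact hbdry m ⟨hmK, hm_int⟩

theorem hasDerivAt_const_mul_affine_rpow (κ a b m : ℝ) {u : ℝ} (hu : a + b * u ≠ 0) :
    HasDerivAt (fun v ↦ κ * (a + b * v) ^ m) (κ * m * b * (a + b * u) ^ (m - 1)) u := by
  have := ((((hasDerivAt_id u).const_mul b).const_add a).rpow_const (p := m) (Or.inl hu)).const_mul κ
  exact this.congr_deriv (by simp only [id]; ring)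

theorem inv_le_rpow_neg_two {x y : ℝ} (hx : 0 < x) (hxy : x ^ 2 ≤ y) : y⁻¹ ≤ x ^ (-2 : ℝ) := by
  rw [Real.rpow_neg hx.le, Real.rpow_two]
  gcongr

section Comparison

variable {d : ℕ}

theorem hasDerivAt_comp_add_smul_single {f : EuclideanSpace ℝ (Fin d) → ℝ}
    {x : EuclideanSpace ℝ (Fin d)} {i : Fin d} {t : ℝ}
    (hf : DifferentiableAt ℝ f (x + t • EuclideanSpace.single i 1)) :
    HasDerivAt (fun s : ℝ ↦ f (x + s • EuclideanSpace.single i 1))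
      (pd i f (x + t • EuclideanSpace.single i 1)) t := by
  have := hf.hasFDerivAt.comp_hasDerivAt t
    (((hasDerivAt_id t).smul_const (EuclideanSpace.single i (1 : ℝ))).const_add x)
  simp only [id, one_smul] at this
  exact this

theorem hasDerivAt_norm_add_smul_single_sq (x : EuclideanSpace ℝ (Fin d)) (i : Fin d) (t : ℝ) :
    HasDerivAt (fun s : ℝ ↦ ‖x + s • EuclideanSpace.single i 1‖ ^ 2) (2 * (x i + t)) t := by
  simpa [inner_add_left, real_inner_smul_left, EuclideanSpace.inner_single_right] using
    (((hasDerivAt_id t).smul_const (EuclideanSpace.single i (1 : ℝ))).const_add x).norm_sq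

theorem pd_pd_le_of_isLocalMax_sub_radial {W : EuclideanSpace ℝ (Fin d) → ℝ}
    {x : EuclideanSpace ℝ (Fin d)} (hW : ContDiffAt ℝ 2 W x) {g g' : ℝ → ℝ} {g'' : ℝ}
    (hg : ∀ᶠ u in 𝓝 (‖x‖ ^ 2), HasDerivAt g (g' u) u) (hg' : HasDerivAt g' g'' (‖x‖ ^ 2))
    (hmax : IsLocalMax (fun y ↦ W y - g (‖y‖ ^ 2)) x) (i : Fin d) :
    pd i (pd i W) x ≤ 4 * x i ^ 2 * g'' + 2 * g' (‖x‖ ^ 2) := by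
  let line : ℝ → EuclideanSpace ℝ (Fin d) := fun t ↦ x + t • EuclideanSpace.single i 1
  have hline : Continuous line := by fun_prop
  have hline0 : line 0 = x := by simp [line]
  have hline_tendsto : Tendsto line (𝓝 0) (𝓝 x) := hline0 ▸ hline.tendsto 0
  have hW_near : ∀ᶠ t in 𝓝 (0 : ℝ), DifferentiableAt ℝ W (line t) :=
    hline_tendsto.eventually <|
      (hW.eventually (by simp)).mono fun y hy ↦ hy.differentiableAt (by norm_num)
  have hg_near : ∀ᶠ t in 𝓝 (0 : ℝ), HasDerivAt g (g' (‖line t‖ ^ 2)) (‖line t‖ ^ 2) :=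
    ((continuous_norm.comp hline).pow 2 |>.tendsto' 0 _ (by simp [hline0])).eventually hg
  let h' : ℝ → ℝ := fun t ↦ pd i W (line t) - g' (‖line t‖ ^ 2) * (2 * (x i + t))
  have hderiv : deriv (fun t ↦ W (line t) - g (‖line t‖ ^ 2)) =ᶠ[𝓝 0] h' := by
    filter_upwards [hW_near, hg_near] with t hWt hgt
    exact ((hasDerivAt_comp_add_smul_single hWt).sub
      (hgt.comp t (hasDerivAt_norm_add_smul_single_sq x i t))).deriv
  have hpd : DifferentiableAt ℝ (pd i W) (line 0) := hline0.symm ▸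
    ((hW.fderiv_right (m := 1) (by norm_num)).differentiableAt one_ne_zero).clm_apply
      (differentiableAt_const _)
  have hh' : HasDerivAt h'
      (pd i (pd i W) x - (g'' * (2 * x i) * (2 * x i) + g' (‖x‖ ^ 2) * 2)) 0 := by
    have h1 := hasDerivAt_comp_add_smul_single hpd
    have h2 := (hline0.symm ▸ hg').comp (0 : ℝ) (hasDerivAt_norm_add_smul_single_sq x i 0)
    have h3 : HasDerivAt (fun t : ℝ ↦ 2 * (x i + t)) 2 0 := by
      simpa using ((hasDerivAt_id (0 : ℝ)).const_add (x i)).const_mul 2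
    refine (h1.sub (h2.mul h3)).congr_deriv ?_
    simp only [zero_smul, add_zero, Function.comp_apply]
  have hmax0 : IsLocalMax (fun t ↦ W (line t) - g (‖line t‖ ^ 2)) 0 :=
    (hline0.symm ▸ hmax).comp_continuous hline.continuousAt
  have hcont : ContinuousAt (fun t ↦ W (line t) - g (‖line t‖ ^ 2)) 0 := by
    have hWc : ContinuousAt W (line 0) := hline0.symm ▸ hW.continuousAt
    have hgc : ContinuousAt g (‖line 0‖ ^ 2) := hline0.symm ▸ hg.self_of_nhds.continuousAt
    exact (hWc.comp hline.continuousAt).sub (hgc.comp (f := fun t ↦ ‖line t‖ ^ 2) (by fun_prop))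
  have hsecond := hmax0.deriv_deriv_nonpos_s13 hcont
  rw [hderiv.deriv_eq, hh'.deriv] at hsecond
  linarith

theorem laplacian_le_of_isLocalMax_sub_radial {W : EuclideanSpace ℝ (Fin d) → ℝ}
    {x : EuclideanSpace ℝ (Fin d)} (hW : ContDiffAt ℝ 2 W x) {g g' : ℝ → ℝ} {g'' : ℝ}
    (hg : ∀ᶠ u in 𝓝 (‖x‖ ^ 2), HasDerivAt g (g' u) u) (hg' : HasDerivAt g' g'' (‖x‖ ^ 2))
    (hmax : IsLocalMax (fun y ↦ W y - g (‖y‖ ^ 2)) x) :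
    ∑ i, pd i (pd i W) x ≤ 4 * ‖x‖ ^ 2 * g'' + 2 * d * g' (‖x‖ ^ 2) := by
  calc ∑ i, pd i (pd i W) x ≤ ∑ i, (4 * x i ^ 2 * g'' + 2 * g' (‖x‖ ^ 2)) :=
        Finset.sum_le_sum fun i _ ↦ pd_pd_le_of_isLocalMax_sub_radial hW hg hg' hmax i
    _ = 4 * ‖x‖ ^ 2 * g'' + 2 * d * g' (‖x‖ ^ 2) := by
        simp [Finset.sum_add_distrib, ← Finset.sum_mul, ← Finset.mul_sum,
          EuclideanSpace.norm_sq_eq]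
        ring

theorem le_radial_of_subsolution {W V : EuclideanSpace ℝ (Fin d) → ℝ} {p r : ℝ} (hp : 0 < p)
    (hW : ContDiff ℝ 2 W) (hV : ∀ x, ‖x‖ ≤ r → 0 < V x)
    (hsub : ∀ x, ‖x‖ ≤ r → V x * W x ^ p ≤ ∑ i, pd i (pd i W) x)
    {g g' g'' : ℝ → ℝ} {S : Set ℝ} (hS : IsOpen S) (hrS : Icc 0 (r ^ 2) ⊆ S)
    (hg : ∀ u ∈ S, HasDerivAt g (g' u) u) (hg' : ∀ u ∈ S, HasDerivAt g' (g'' u) u)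
    (hg_nonneg : ∀ u ∈ Icc 0 (r ^ 2), 0 ≤ g u)
    (hsuper : ∀ x, ‖x‖ ≤ r →
      4 * ‖x‖ ^ 2 * g'' (‖x‖ ^ 2) + 2 * d * g' (‖x‖ ^ 2) ≤ V x * g (‖x‖ ^ 2) ^ p)
    (hbdry : ∀ x, ‖x‖ = r → W x ≤ g (r ^ 2)) :
    ∀ x, ‖x‖ ≤ r → W x ≤ g (‖x‖ ^ 2) := by
  have hIcc : ∀ x : EuclideanSpace ℝ (Fin d), ‖x‖ ≤ r → ‖x‖ ^ 2 ∈ Icc 0 (r ^ 2) := fun x hx ↦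
    ⟨by positivity, pow_le_pow_left₀ (norm_nonneg x) hx 2⟩
  have hcont : ContinuousOn (fun y ↦ W y - g (‖y‖ ^ 2)) (Metric.closedBall 0 r) := by
    refine hW.continuous.continuousOn.sub fun y hy ↦ ?_
    have hgy := (hg _ (hrS (hIcc y (mem_closedBall_zero_iff.mp hy)))).continuousAt
    exact (hgy.comp (f := fun y ↦ ‖y‖ ^ 2) (by fun_prop)).continuousWithinAt
  intro x hx
  suffices W x - g (‖x‖ ^ 2) ≤ 0 by linarith
  refine (isCompact_closedBall 0 r).le_of_forall_isLocalMax_le hcont ?_ ?_ x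
    (mem_closedBall_zero_iff.mpr hx)
  · rintro y ⟨hy, hy_int⟩
    have hy_norm : ‖y‖ = r := le_antisymm (mem_closedBall_zero_iff.mp hy) <| not_lt.mp fun h ↦
      hy_int (interior_maximal Metric.ball_subset_closedBall Metric.isOpen_ball
        (mem_ball_zero_iff.mpr h))
    simpa [hy_norm] using hbdry y hy_norm
  · intro y hy hmax
    have hy_norm := mem_closedBall_zero_iff.mp (interior_subset hy)
    have hyS := hrS (hIcc y hy_norm)
    have hΔ := laplacian_le_of_isLocalMax_sub_radial hW.contDiffAt
      (hS.eventually_mem hyS |>.mono hg) (hg' _ hyS) hmax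
    have hpow : W y ^ p ≤ g (‖y‖ ^ 2) ^ p := le_of_mul_le_mul_left
      ((hsub y hy_norm).trans (hΔ.trans (hsuper y hy_norm))) (hV y hy_norm)
    have hgy := hg_nonneg _ (hIcc y hy_norm)
    exact sub_nonpos.mpr <| not_lt.mp fun hlt ↦ (Real.rpow_lt_rpow hgy hlt hp).not_ge hpow

/-- The left side of `hsuper` is `Δφ` for `φ x = g (‖x‖²)`, `g u = κ (a + b u)^m`. -/
theorem le_power_barrier_of_subsolution {W V : EuclideanSpace ℝ (Fin d) → ℝ}
    {p r κ a b m : ℝ} (hp : 0 < p) (hW : ContDiff ℝ 2 W) (hV : ∀ x, ‖x‖ ≤ r → 0 < V x)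
    (hsub : ∀ x, ‖x‖ ≤ r → V x * W x ^ p ≤ ∑ i, pd i (pd i W) x)
    (hκ : 0 ≤ κ) (hpos : ∀ u ∈ Icc 0 (r ^ 2), 0 < a + b * u)
    (hsuper : ∀ x, ‖x‖ ≤ r →
      4 * ‖x‖ ^ 2 * (κ * m * b * (m - 1) * b * (a + b * ‖x‖ ^ 2) ^ (m - 1 - 1)) +
        2 * d * (κ * m * b * (a + b * ‖x‖ ^ 2) ^ (m - 1)) ≤
      V x * (κ * (a + b * ‖x‖ ^ 2) ^ m) ^ p)
    (hbdry : ∀ x, ‖x‖ = r → W x ≤ κ * (a + b * r ^ 2) ^ m) :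
    ∀ x, ‖x‖ ≤ r → W x ≤ κ * (a + b * ‖x‖ ^ 2) ^ m :=
  le_radial_of_subsolution hp hW hV hsub (S := {u | 0 < a + b * u})
    (isOpen_lt continuous_const (by fun_prop)) hpos
    (fun u hu ↦ hasDerivAt_const_mul_affine_rpow κ a b m (ne_of_gt hu))
    (fun u hu ↦ hasDerivAt_const_mul_affine_rpow (κ * m * b) a b (m - 1) (ne_of_gt hu))
    (fun u hu ↦ by have := hpos u hu; positivity) hsuper hbdry

theorem blowup_barrier_base_pos {R u : ℝ} (hR : 0 < R) (hu : u < R ^ 2) :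
    0 < 1 + -(R ^ 2)⁻¹ * u := by
  have : u / R ^ 2 < 1 := (div_lt_one (by positivity)).mpr hu
  rw [neg_mul, ← sub_eq_add_neg, inv_mul_eq_div]
  linarith

theorem exists_blowup_barrier_ge {κ μ ρ R : ℝ} (hκ : 0 < κ) (hμ : 0 < μ) (hρ : 0 ≤ ρ)
    (hρR : ρ < R) (M : ℝ) : ∃ r, ρ < r ∧ r < R ∧ M ≤ κ * (1 + -(R ^ 2)⁻¹ * r ^ 2) ^ (-μ) := by
  have hR : 0 < R := hρ.trans_lt hρR
  have hbase : Tendsto (fun r ↦ 1 + -(R ^ 2)⁻¹ * r ^ 2) (𝓝[<] R) (𝓝[>] 0) := by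
    refine tendsto_nhdsWithin_iff.mpr ⟨?_, ?_⟩
    · have : Tendsto (fun r ↦ 1 + -(R ^ 2)⁻¹ * r ^ 2) (𝓝 R) (𝓝 (1 + -(R ^ 2)⁻¹ * R ^ 2)) :=
        (by fun_prop : Continuous fun r : ℝ ↦ 1 + -(R ^ 2)⁻¹ * r ^ 2).tendsto R
      rw [neg_mul, inv_mul_cancel₀ (by positivity), add_neg_cancel] at this
      exact this.mono_left nhdsWithin_le_nhds
    · filter_upwards [self_mem_nhdsWithin, nhdsWithin_le_nhds (eventually_gt_nhds hR)]
        with r hrR hr0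
      exact blowup_barrier_base_pos hR (pow_lt_pow_left₀ hrR hr0.le two_ne_zero)
  have hblowup := ((tendsto_rpow_neg_nhdsGT_zero (neg_lt_zero.mpr hμ)).const_mul_atTop hκ).comp
    hbase
  have hρ_near : ∀ᶠ r in 𝓝[<] R, ρ < r := nhdsWithin_le_nhds (eventually_gt_nhds hρR)
  obtain ⟨r, ⟨hρr, hrR⟩, hr_big⟩ :=
    (hρ_near.and eventually_mem_nhdsWithin |>.and (hblowup.eventually_ge_atTop M)).exists
  exact ⟨r, hρr, hrR, hr_big⟩

/-- The hypothesis `hsuper` of `le_power_barrier_of_subsolution` for `a = 1`, `b = -R⁻²`,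
`m = -μ`, at `t = ‖x‖`. -/
theorem blowup_barrier_supersolution {p c μ κ R t : ℝ} (hμ : 0 < μ)
    (hμp : μ * (p - 1) = 2) (hκ : 0 < κ) (hκp : 4 * μ * (4 * μ + 4 + 2 * d) ≤ c * κ ^ (p - 1))
    (hR : 1 ≤ R) (ht : 0 ≤ t) (htR : t < R) :
    4 * t ^ 2 * (κ * -μ * -(R ^ 2)⁻¹ * (-μ - 1) * -(R ^ 2)⁻¹ *
        (1 + -(R ^ 2)⁻¹ * t ^ 2) ^ (-μ - 1 - 1)) +
      2 * d * (κ * -μ * -(R ^ 2)⁻¹ * (1 + -(R ^ 2)⁻¹ * t ^ 2) ^ (-μ - 1)) ≤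
    c * (1 + t) ^ (-2 : ℝ) * (κ * (1 + -(R ^ 2)⁻¹ * t ^ 2) ^ (-μ)) ^ p := by
  have hR0 : 0 < R := by linarith
  have htR2 : t ^ 2 / R ^ 2 ≤ 1 := (div_le_one (by positivity)).mpr (by nlinarith)
  have hv : 0 < 1 + -(R ^ 2)⁻¹ * t ^ 2 :=
    blowup_barrier_base_pos hR0 (pow_lt_pow_left₀ htR ht two_ne_zero)
  set v := 1 + -(R ^ 2)⁻¹ * t ^ 2
  have hv_eq : v = 1 - t ^ 2 / R ^ 2 := by ring
  have hv1 : v ≤ 1 := by rw [hv_eq]; linarith [div_nonneg (sq_nonneg t) (sq_nonneg R)]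
  set w := v ^ (-μ - 2)
  have e1 : v ^ (-μ - 1 - 1) = w := by rw [sub_sub, one_add_one_eq_two]
  have e2 : v ^ (-μ - 1) = v * w := by
    rw [show -μ - 1 = 1 + (-μ - 2) by ring, Real.rpow_add hv, Real.rpow_one]
  have e3 : (κ * v ^ (-μ)) ^ p = κ ^ (p - 1) * κ * w := by
    rw [Real.mul_rpow hκ.le (by positivity), ← Real.rpow_mul hv.le,
      show -μ * p = -μ - 2 by linarith, Real.rpow_sub_one hκ.ne', div_mul_cancel₀ _ hκ.ne']
  have hc : 0 ≤ c * κ ^ (p - 1) := (by positivity : (0 : ℝ) ≤ _).trans hκp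
  calc _ = κ * μ * w / R ^ 2 * (4 * (μ + 1) * (t ^ 2 / R ^ 2) + 2 * d * v) := by
        rw [e1, e2]; field_simp; ring
    _ ≤ κ * μ * w / R ^ 2 * (4 * (μ + 1) * 1 + 2 * d * 1) := by gcongr
    _ = 4 * μ * (4 * μ + 4 + 2 * d) * (κ * w) * ((2 * R) ^ 2)⁻¹ := by field_simp; ring
    _ ≤ c * κ ^ (p - 1) * (κ * w) * (1 + t) ^ (-2 : ℝ) := by
        gcongr
        exact inv_le_rpow_neg_two (by positivity) (by gcongr; linarith)
    _ = _ := by rw [e3]; ring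

/-- The hypothesis `hsuper` of `le_power_barrier_of_subsolution` for `a = b = 1`, `m = s`,
at `t = ‖x‖`. -/
theorem growth_barrier_supersolution {p c ε s t : ℝ} (hp : 1 ≤ p) (hε : 0 < ε)
    (hs : 0 < s) (hs1 : s ≤ 1) (hεs : 4 * d * s ≤ c * ε ^ (p - 1)) (ht : 0 ≤ t) :
    4 * t ^ 2 * (ε * s * 1 * (s - 1) * 1 * (1 + 1 * t ^ 2) ^ (s - 1 - 1)) +
      2 * d * (ε * s * 1 * (1 + 1 * t ^ 2) ^ (s - 1)) ≤
    c * (1 + t) ^ (-2 : ℝ) * (ε * (1 + 1 * t ^ 2) ^ s) ^ p := by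
  set v := 1 + 1 * t ^ 2
  have hv : 1 ≤ v := by nlinarith
  have hv0 : 0 < v := by linarith
  have hconcave : 4 * t ^ 2 * (ε * s * 1 * (s - 1) * 1 * v ^ (s - 1 - 1)) ≤ 0 := by
    have : 0 ≤ 4 * t ^ 2 * (ε * s * v ^ (s - 1 - 1)) := by positivity
    nlinarith
  have e : (ε * v ^ s) ^ p = ε ^ (p - 1) * ε * (v ^ (s * p - 1) * v) := by
    rw [Real.mul_rpow hε.le (by positivity), ← Real.rpow_mul hv0.le, Real.rpow_sub_one hε.ne',
      Real.rpow_sub_one hv0.ne', div_mul_cancel₀ _ hε.ne', div_mul_cancel₀ _ hv0.ne']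
  have hc : 0 ≤ c * ε ^ (p - 1) := (by positivity : (0 : ℝ) ≤ _).trans hεs
  calc _ ≤ 2 * d * (ε * s * 1 * v ^ (s - 1)) := by linarith
    _ = 4 * d * s * (ε * v ^ (s - 1)) * (2 * v)⁻¹ * v := by field_simp; ring
    _ ≤ c * ε ^ (p - 1) * (ε * v ^ (s * p - 1)) * (2 * v)⁻¹ * v := by
        gcongr
        exact le_mul_of_one_le_right hs.le hp
    _ ≤ c * ε ^ (p - 1) * (ε * v ^ (s * p - 1)) * (1 + t) ^ (-2 : ℝ) * v := by
        gcongr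
        exact inv_le_rpow_neg_two (by positivity) (by nlinarith [sq_nonneg (1 - t)])
    _ = _ := by rw [e]; ring

end Comparison

section Liouville

variable {d : ℕ} {W : EuclideanSpace ℝ (Fin d) → ℝ} {p c : ℝ}

theorem bddAbove_range_of_subsolution (hp : 1 < p) (hc : 0 < c) (hW : ContDiff ℝ 2 W)
    (hsub : ∀ x, c * (1 + ‖x‖) ^ (-2 : ℝ) * W x ^ p ≤ ∑ i, pd i (pd i W) x) :
    BddAbove (range W) := by
  have hp1 : 0 < p - 1 := by linarith
  set μ := 2 / (p - 1)
  have hμ : 0 < μ := by positivity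
  have hμp : μ * (p - 1) = 2 := div_mul_cancel₀ _ hp1.ne'
  set C := 4 * μ * (4 * μ + 4 + 2 * d) / c
  set κ := C ^ (p - 1)⁻¹
  have hκ : 0 < κ := by positivity
  have hκp : 4 * μ * (4 * μ + 4 + 2 * d) ≤ c * κ ^ (p - 1) := by
    rw [Real.rpow_inv_rpow (by positivity) hp1.ne', mul_div_cancel₀ _ hc.ne']
  refine ⟨κ * 2⁻¹ ^ (-μ), ?_⟩
  rintro _ ⟨z, rfl⟩
  set R := 2 * ‖z‖ + 1
  have hR : 1 ≤ R := by linarith [norm_nonneg z]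
  obtain ⟨M, hM⟩ := (isCompact_closedBall (0 : EuclideanSpace ℝ (Fin d)) R).bddAbove_image
    hW.continuous.continuousOn
  obtain ⟨r, hzr, hrR, hr_big⟩ :=
    exists_blowup_barrier_ge (R := R) hκ hμ (norm_nonneg z) (by linarith [norm_nonneg z]) M
  have hcomp := le_power_barrier_of_subsolution (V := fun x ↦ c * (1 + ‖x‖) ^ (-2 : ℝ))
    (r := r) (a := 1) (b := -(R ^ 2)⁻¹) (m := -μ) (by positivity) hW
    (fun _ _ ↦ by positivity) (fun x _ ↦ hsub x) hκ.le
    (fun u hu ↦ blowup_barrier_base_pos (by linarith)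
      (hu.2.trans_lt (pow_lt_pow_left₀ hrR ((norm_nonneg z).trans hzr.le) two_ne_zero)))
    (fun x hx ↦ blowup_barrier_supersolution hμ hμp hκ hκp hR (norm_nonneg x) (hx.trans_lt hrR))
    (fun x hx ↦ (hM ⟨x, mem_closedBall_zero_iff.mpr (hx.trans_le hrR.le), rfl⟩).trans hr_big)
    z hzr.le
  refine hcomp.trans (mul_le_mul_of_nonneg_left ?_ hκ.le)
  refine Real.rpow_le_rpow_of_nonpos (by norm_num) ?_ (neg_nonpos.mpr hμ.le)
  have hz_half : ‖z‖ ^ 2 / R ^ 2 ≤ 2⁻¹ := by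
    rw [div_le_iff₀ (by positivity)]
    nlinarith [norm_nonneg z]
  rw [neg_mul, ← sub_eq_add_neg, inv_mul_eq_div]
  linarith

theorem le_growth_barrier_of_subsolution (hp : 1 < p) (hc : 0 < c) (hW : ContDiff ℝ 2 W)
    (hsub : ∀ x, c * (1 + ‖x‖) ^ (-2 : ℝ) * W x ^ p ≤ ∑ i, pd i (pd i W) x) {ε s : ℝ}
    (hε : 0 < ε) (hs : 0 < s) (hs1 : s ≤ 1) (hεs : 4 * d * s ≤ c * ε ^ (p - 1))
    (y : EuclideanSpace ℝ (Fin d)) : W y ≤ ε * (1 + ‖y‖ ^ 2) ^ s := by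
  obtain ⟨K, hK⟩ := bddAbove_range_of_subsolution hp hc hW hsub
  have hgrowth : Tendsto (fun r : ℝ ↦ ε * (1 + 1 * r ^ 2) ^ s) atTop atTop := by
    refine ((tendsto_rpow_atTop hs).comp ?_).const_mul_atTop hε
    simpa using tendsto_atTop_add_const_left _ 1 (tendsto_pow_atTop two_ne_zero)
  obtain ⟨r, hr_big, hyr⟩ := ((hgrowth.eventually_ge_atTop K).and (eventually_ge_atTop ‖y‖)).exists
  simpa using le_power_barrier_of_subsolution (V := fun x ↦ c * (1 + ‖x‖) ^ (-2 : ℝ))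
    (r := r) (a := 1) (b := 1) (m := s) (by linarith) hW
    (fun _ _ ↦ by positivity) (fun x _ ↦ hsub x) hε.le (fun u hu ↦ by linarith [hu.1])
    (fun x _ ↦ growth_barrier_supersolution hp.le hε hs hs1 hεs (norm_nonneg x))
    (fun x _ ↦ (hK ⟨x, rfl⟩).trans hr_big) y hyr

theorem nonpos_of_subsolution (hp : 1 < p) (hc : 0 < c) (hW : ContDiff ℝ 2 W)
    (hsub : ∀ x, c * (1 + ‖x‖) ^ (-2 : ℝ) * W x ^ p ≤ ∑ i, pd i (pd i W) x)
    (y : EuclideanSpace ℝ (Fin d)) : W y ≤ 0 := by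
  have hp1 : 0 < p - 1 := by linarith
  -- `d + 1` rather than `d`, so that `ε s > 0` also when `d = 0`
  set ε : ℝ → ℝ := fun s ↦ (4 * (d + 1) * s / c) ^ (p - 1)⁻¹
  have hbound : ∀ s ∈ Ioc (0 : ℝ) 1, W y ≤ ε s * (1 + ‖y‖ ^ 2) ^ s := fun s hs ↦ by
    refine le_growth_barrier_of_subsolution hp hc hW hsub (by have := hs.1; positivity) hs.1 hs.2
      ?_ y
    rw [Real.rpow_inv_rpow (by have := hs.1; positivity) hp1.ne', mul_div_cancel₀ _ hc.ne']
    nlinarith [hs.1]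
  have hcont : ContinuousAt (fun s ↦ ε s * (1 + ‖y‖ ^ 2) ^ s) 0 := by
    refine ContinuousAt.mul ?_ ?_
    · exact (continuousAt_const.mul continuousAt_id |>.div_const c).rpow_const
        (Or.inr (inv_nonneg.mpr hp1.le))
    · exact continuousAt_const.rpow continuousAt_id (Or.inl (by positivity))
  have hlim : Tendsto (fun s ↦ ε s * (1 + ‖y‖ ^ 2) ^ s) (𝓝[>] 0) (𝓝 0) := by
    have := hcont.tendsto
    simp only [ε, mul_zero, zero_div, Real.zero_rpow (inv_ne_zero hp1.ne'), zero_mul] at this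
    exact this.mono_left nhdsWithin_le_nhds
  exact ge_of_tendsto hlim (Filter.mem_of_superset (Ioc_mem_nhdsGT zero_lt_one) hbound)

end Liouville

theorem stmt_13_general {d : ℕ} (p : ℝ) (hp : 1 < p) (c : ℝ) (hc : 0 < c)
    (W : EuclideanSpace ℝ (Fin d) → ℝ)
    (hW_smooth : ContDiff ℝ 2 W)
    (hW_nonneg : ∀ x, 0 ≤ W x)
    (hW_eq : ∀ x, (∑ i, pd i (pd i W) x) = c * (1 + ‖x‖) ^ (-2 : ℝ) * W x ^ p) :
    ∀ x, W x = 0 := fun x ↦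
  le_antisymm (nonpos_of_subsolution hp hc hW_smooth (fun y ↦ (hW_eq y).ge) x) (hW_nonneg x)

/-- the only nonnegative `C²` solution of
`ΔW = c(1+|x|)^{−2} W^p` on `ℝ^d` is `W ≡ 0`. -/
theorem stmt_13 {d : ℕ} (hd : 1 ≤ d) (p : ℝ) (hp : 1 < p) (c : ℝ) (hc : 0 < c)
    (W : EuclideanSpace ℝ (Fin d) → ℝ)
    (hW_smooth : ContDiff ℝ 2 W)
    (hW_nonneg : ∀ x, 0 ≤ W x)
    (hW_eq : ∀ x, (∑ i, pd i (pd i W) x) = c * (1 + ‖x‖) ^ (-2 : ℝ) * W x ^ p) :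
    ∀ x, W x = 0 :=
  stmt_13_general p hp c hc W hW_smooth hW_nonneg hW_eq
end
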